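/- arXiv:2012.14811 — 7 statements merged into one kernel-verified Lean document; each statement's English description precedes it below -/
import Mathlib

section
/- Let S be an association scheme. For relations R_a, R_b, the number of relations R_c with p_{ab}^c > 0 (i.e. |R_a R_b|) is at most the greatest common divisor of k_a and k_b. -/
open scoped Classical

/-- An association scheme on a finite set `X` with `d + 1` relations. -/
structure AssocScheme (X : Type) [Fintype X] (d : ℕ) where
  /-- the relations `R_0, …, R_d` -/
  R : Fin (d + 1) → X → X → Prop
  rel_nonempty : ∀ i, ∃ x y, R i x y
  partition : ∀ x y, ∃! i, R i x y
  diag : ∀ x y, R 0 x y ↔ x = y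
  /-- the transpose involution `a ↦ a'` -/
  inv : Fin (d + 1) → Fin (d + 1)
  inv_spec : ∀ i x y, R (inv i) x y ↔ R i y x
  /-- the intersection numbers `p_{ij}^k` -/
  p : Fin (d + 1) → Fin (d + 1) → Fin (d + 1) → ℕ
  p_spec : ∀ i j k x y, R k x y → {z | R i x z ∧ R j z y}.ncard = p i j k

namespace AssocScheme

variable {X : Type} [Fintype X] [DecidableEq X] {d : ℕ}

/-- the valency `k_a = p_{a a'}^0` -/
def k (S : AssocScheme X d) (a : Fin (d + 1)) : ℕ := S.p a (S.inv a) 0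

/-- `|R_a R_b|`, the number of relations in the complex product -/
def nProd (S : AssocScheme X d) (a b : Fin (d + 1)) : ℕ :=
  (Finset.univ.filter fun c => 0 < S.p a b c).card

/-- the adjacency matrix of `R_b` over `F` -/
noncomputable def adj (S : AssocScheme X d) (F : Type) [Field F] (b : Fin (d + 1)) :
    Matrix X X F :=
  Matrix.of fun u v => if S.R b u v then 1 else 0

/-- the dual idempotent `E_a^*(x)` -/
noncomputable def dualIdem (S : AssocScheme X d) (F : Type) [Field F] (x : X)
    (a : Fin (d + 1)) : Matrix X X F :=
  Matrix.diagonal fun u => if S.R a x u then 1 else 0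

/-- the Terwilliger `F`-algebra of `S` with respect to the vertex `x` -/
noncomputable def Terw (S : AssocScheme X d) (F : Type) [Field F] (x : X) :
    Subalgebra F (Matrix X X F) :=
  Algebra.adjoin F (Set.range (S.adj F) ∪ Set.range (S.dualIdem F x))

/-- the all-ones matrix -/
def allOnes (X : Type) (F : Type) [Field F] : Matrix X X F := Matrix.of fun _ _ => 1

end AssocScheme

open AssocScheme

namespace AssocScheme

section Aux
variable {X : Type} [Fintype X] {d : ℕ} (S : AssocScheme X d)

lemma card_p (i j kk : Fin (d+1)) (x y : X) (h : S.R kk x y) :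
    (Finset.univ.filter fun z => S.R i x z ∧ S.R j z y).card = S.p i j kk := by
  rw [← S.p_spec i j kk x y h, Set.ncard_eq_toFinset_card']
  congr 1; ext z; simp

lemma card_k (a : Fin (d+1)) (x : X) :
    (Finset.univ.filter fun z => S.R a x z).card = S.k a := by
  have h0 : S.R 0 x x := (S.diag x x).mpr rfl
  rw [AssocScheme.k, ← card_p S a (S.inv a) 0 x x h0]
  congr 1; ext z; simp [S.inv_spec]

lemma sum_k (a : Fin (d+1)) (x : X) :
    (∑ z : X, if S.R a x z then 1 else 0) = S.k a := by
  rw [← card_k S a x, Finset.card_filter]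

lemma card_k' (a : Fin (d+1)) (y : X) :
    (Finset.univ.filter fun x => S.R a x y).card = S.k (S.inv a) := by
  rw [← card_k S (S.inv a) y]; congr 1; ext x; simp [S.inv_spec]

lemma k_pos (a : Fin (d+1)) : 0 < S.k a := by
  obtain ⟨x, z, h⟩ := S.rel_nonempty a
  rw [← card_k S a x]
  exact Finset.card_pos.mpr ⟨z, by simp [h]⟩

lemma k_inv (a : Fin (d+1)) : S.k (S.inv a) = S.k a := by
  obtain ⟨x0, -, -⟩ := S.rel_nonempty 0
  have hn : 0 < Fintype.card X := Fintype.card_pos_iff.mpr ⟨x0⟩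
  have hcomm := Finset.sum_comm (s := (Finset.univ : Finset X))
    (t := (Finset.univ : Finset X)) (f := fun x z => if S.R a x z then (1:ℕ) else 0)
  have h1 : ∀ x : X, (∑ z : X, if S.R a x z then 1 else 0) = S.k a := sum_k S a
  have h2 : ∀ z : X, (∑ x : X, if S.R a x z then 1 else 0) = S.k (S.inv a) := by
    intro z
    rw [← card_k' S a z, Finset.card_filter]
  simp only [h1, h2, Finset.sum_const, smul_eq_mul, Finset.card_univ] at hcomm
  exact Nat.eq_of_mul_eq_mul_left hn hcomm.symm

lemma sum_ite_const (P : X → Prop) (m : ℕ) :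
    (∑ y : X, if P y then m else 0) = (Finset.univ.filter P).card * m := by
  rw [← Finset.sum_filter, Finset.sum_const, smul_eq_mul]

/-- `k_c * p_abc = k_a * p_{b c' a'}`, hence `k_a ∣ k_c * p_abc`. -/
lemma ka_dvd (a b c : Fin (d+1)) : S.k a ∣ S.k c * S.p a b c := by
  obtain ⟨x, -, -⟩ := S.rel_nonempty 0
  have hy : ∀ y : X, (∑ z : X, if S.R a x z ∧ S.R b z y ∧ S.R c x y then 1 else 0)
      = if S.R c x y then S.p a b c else 0 := by
    intro y
    by_cases h : S.R c x y
    · rw [if_pos h, ← card_p S a b c x y h, Finset.card_filter]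
      exact Finset.sum_congr rfl fun z _ => by simp [h]
    · simp [h]
  have hz : ∀ z : X, (∑ y : X, if S.R a x z ∧ S.R b z y ∧ S.R c x y then 1 else 0)
      = if S.R a x z then S.p b (S.inv c) (S.inv a) else 0 := by
    intro z
    by_cases h : S.R a x z
    · have hz' : S.R (S.inv a) z x := (S.inv_spec a z x).mpr h
      rw [if_pos h, ← card_p S b (S.inv c) (S.inv a) z x hz', Finset.card_filter]
      exact Finset.sum_congr rfl fun y _ => by simp [h, S.inv_spec]
    · simp [h]
  have hcomm := Finset.sum_comm (s := (Finset.univ : Finset X))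
    (t := (Finset.univ : Finset X))
    (f := fun y z => if S.R a x z ∧ S.R b z y ∧ S.R c x y then (1:ℕ) else 0)
  simp only [hy, hz] at hcomm
  rw [sum_ite_const, sum_ite_const, card_k, card_k] at hcomm
  exact ⟨S.p b (S.inv c) (S.inv a), hcomm⟩


/-- `k_b ∣ k_c * p_abc`. -/
lemma kb_dvd (a b c : Fin (d+1)) : S.k b ∣ S.k c * S.p a b c := by
  obtain ⟨-, y, -⟩ := S.rel_nonempty 0
  have hx : ∀ x : X, (∑ z : X, if S.R a x z ∧ S.R b z y ∧ S.R c x y then 1 else 0)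
      = if S.R c x y then S.p a b c else 0 := by
    intro x
    by_cases h : S.R c x y
    · rw [if_pos h, ← card_p S a b c x y h, Finset.card_filter]
      exact Finset.sum_congr rfl fun z _ => by simp [h]
    · simp [h]
  have hz : ∀ z : X, (∑ x : X, if S.R a x z ∧ S.R b z y ∧ S.R c x y then 1 else 0)
      = if S.R b z y then S.p (S.inv a) c b else 0 := by
    intro z
    by_cases h : S.R b z y
    · rw [if_pos h, ← card_p S (S.inv a) c b z y h, Finset.card_filter]
      exact Finset.sum_congr rfl fun x _ => by simp [h, S.inv_spec]
    · simp [h]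
  have hcomm := Finset.sum_comm (s := (Finset.univ : Finset X))
    (t := (Finset.univ : Finset X))
    (f := fun x z => if S.R a x z ∧ S.R b z y ∧ S.R c x y then (1:ℕ) else 0)
  simp only [hx, hz] at hcomm
  rw [sum_ite_const, sum_ite_const, card_k', card_k', k_inv, k_inv] at hcomm
  exact ⟨S.p (S.inv a) c b, hcomm⟩

/-- `k_a * k_b = ∑_c k_c * p_abc`. -/
lemma sum_kp (a b : Fin (d+1)) :
    S.k a * S.k b = ∑ c : Fin (d+1), S.k c * S.p a b c := by
  obtain ⟨x, -, -⟩ := S.rel_nonempty 0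
  have hz : ∀ z : X, (∑ y : X, if S.R a x z ∧ S.R b z y then 1 else 0)
      = if S.R a x z then S.k b else 0 := by
    intro z
    by_cases h : S.R a x z
    · rw [if_pos h, ← sum_k S b z]
      exact Finset.sum_congr rfl fun y _ => by simp [h]
    · simp [h]
  have hy : ∀ y : X, (∑ z : X, if S.R a x z ∧ S.R b z y then 1 else 0)
      = ∑ c : Fin (d+1), if S.R c x y then S.p a b c else 0 := by
    intro y
    obtain ⟨c0, hc0, huniq⟩ := S.partition x y
    rw [Finset.sum_eq_single_of_mem c0 (Finset.mem_univ c0)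
      (fun c _ hne => by rw [if_neg (fun hc => hne (huniq c hc))]),
      if_pos hc0, ← card_p S a b c0 x y hc0, Finset.card_filter]
  have hcomm := Finset.sum_comm (s := (Finset.univ : Finset X))
    (t := (Finset.univ : Finset X))
    (f := fun z y => if S.R a x z ∧ S.R b z y then (1:ℕ) else 0)
  simp only [hz, hy] at hcomm
  rw [sum_ite_const, card_k] at hcomm
  rw [hcomm, Finset.sum_comm]
  exact Finset.sum_congr rfl fun c _ => by rw [sum_ite_const, card_k S c x]

end Aux

end AssocScheme


/-- `|R_a R_b| ≤ gcd(k_a, k_b)`. -/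
theorem stmt_1 {X : Type} [Fintype X] {d : ℕ} (S : AssocScheme X d)
    (a b : Fin (d + 1)) :
    S.nProd a b ≤ Nat.gcd (S.k a) (S.k b) := by
  have ha := S.k_pos a
  have hb := S.k_pos b
  have hl : 0 < Nat.lcm (S.k a) (S.k b) :=
    Nat.pos_of_ne_zero (Nat.lcm_ne_zero ha.ne' hb.ne')
  have key : S.nProd a b * Nat.lcm (S.k a) (S.k b) ≤ S.k a * S.k b := by
    rw [sum_kp S a b]
    have step1 : S.nProd a b * Nat.lcm (S.k a) (S.k b)
        ≤ ∑ c ∈ Finset.univ.filter (fun c => 0 < S.p a b c), S.k c * S.p a b c := by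
      rw [AssocScheme.nProd, ← smul_eq_mul]
      refine Finset.card_nsmul_le_sum _ _ _ fun c hc => ?_
      rw [Finset.mem_filter] at hc
      refine Nat.le_of_dvd (Nat.mul_pos (S.k_pos c) hc.2) ?_
      exact Nat.lcm_dvd (S.ka_dvd a b c) (S.kb_dvd a b c)
    exact step1.trans (Finset.sum_le_sum_of_subset (Finset.filter_subset _ _))
  rw [← Nat.gcd_mul_lcm (S.k a) (S.k b)] at key
  exact Nat.le_of_mul_le_mul_right key hl
end

section
/- With notation as for Terwilliger algebras: if E_i^* A_j E_ℓ^* ≠ O ≠ E_ℓ^* A_m E_n^* and min{k_i, k_j} = 1 or min{k_m, k_n} = 1, then E_i^* A_j E_ℓ^* A_m E_n^* = E_i^* A_j A_m E_n^* = Σ_k (p_{jm}^k mod p) E_i^* A_k E_n^*. -/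
open scoped Classical

section Aux
set_option linter.unusedSectionVars false

variable {X : Type} [Fintype X] [DecidableEq X] {d : ℕ} (S : AssocScheme X d)

lemma ncard_eq_card (P : X → Prop) :
    {z | P z}.ncard = (Finset.univ.filter P).card := by
  rw [Set.ncard_eq_toFinset_card']
  congr 1
  ext z
  simp

lemma p_card (a b c : Fin (d + 1)) {x y : X} (h : S.R c x y) :
    (Finset.univ.filter fun z => S.R a x z ∧ S.R b z y).card = S.p a b c := by
  rw [← S.p_spec a b c x y h, ncard_eq_card]
  congr

lemma sphere_card (x : X) (c : Fin (d + 1)) :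
    (Finset.univ.filter fun z => S.R c x z).card = S.k c := by
  have h0 : S.R 0 x x := (S.diag x x).2 rfl
  have h := p_card S c (S.inv c) 0 h0
  rw [show S.k c = S.p c (S.inv c) 0 from rfl, ← h]
  congr 1
  ext z
  simp [S.inv_spec]

lemma k_pos (c : Fin (d + 1)) : 0 < S.k c := by
  obtain ⟨y, w, hyw⟩ := S.rel_nonempty c
  rw [← sphere_card S y c]
  exact Finset.card_pos.2 ⟨w, by simp [hyw]⟩

lemma p_pos_iff (a b c : Fin (d + 1)) :
    0 < S.p a b c ↔ ∃ x u z, S.R a x u ∧ S.R b u z ∧ S.R c x z := by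
  constructor
  · intro h
    obtain ⟨x, z, hxz⟩ := S.rel_nonempty c
    rw [← p_card S a b c hxz] at h
    obtain ⟨u, hu⟩ := Finset.card_pos.1 h
    simp only [Finset.mem_filter] at hu
    exact ⟨x, u, z, hu.2.1, hu.2.2, hxz⟩
  · rintro ⟨x, u, z, ha, hb, hc⟩
    rw [← p_card S a b c hc]
    exact Finset.card_pos.2 ⟨u, by simp [ha, hb]⟩

lemma k_inv (b : Fin (d + 1)) : S.k (S.inv b) = S.k b := by
  obtain ⟨x0, y0, -⟩ := S.rel_nonempty 0
  have hX : 0 < Fintype.card X := Fintype.card_pos_iff.2 ⟨x0⟩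
  have h1 : ∑ x : X, ∑ z : X, (if S.R b x z then 1 else 0 : ℕ)
      = Fintype.card X * S.k b := by
    have : ∀ x : X, (∑ z : X, (if S.R b x z then 1 else 0 : ℕ)) = S.k b := by
      intro x
      rw [← sphere_card S x b, Finset.card_filter]
    simp [this, Finset.sum_const, Finset.card_univ, mul_comm]
  have h2 : ∑ x : X, ∑ z : X, (if S.R b x z then 1 else 0 : ℕ)
      = Fintype.card X * S.k (S.inv b) := by
    rw [Finset.sum_comm]
    have : ∀ z : X, (∑ x : X, (if S.R b x z then 1 else 0 : ℕ)) = S.k (S.inv b) := by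
      intro z
      rw [← sphere_card S z (S.inv b), Finset.card_filter]
      refine Finset.sum_congr rfl fun x _ => ?_
      simp [S.inv_spec]
    simp [this, Finset.sum_const, Finset.card_univ, mul_comm]
  exact Nat.eq_of_mul_eq_mul_left hX (by rw [← h1, h2])

lemma sum_p_mul_k (a b : Fin (d + 1)) :
    ∑ c, S.p a b c * S.k c = S.k a * S.k b := by
  obtain ⟨x, y0, -⟩ := S.rel_nonempty 0
  have key : ∀ z : X, (Finset.univ.filter fun u => S.R a x u ∧ S.R b u z).card
      = ∑ c : Fin (d + 1), (if S.R c x z then S.p a b c else 0) := by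
    intro z
    obtain ⟨c0, hc0, hu⟩ := S.partition x z
    rw [Finset.sum_eq_single c0]
    · rw [if_pos hc0, p_card S a b c0 hc0]
    · intro c _ hne
      simp only [ite_eq_right_iff]
      intro hc
      exact absurd (hu c hc) hne
    · simp
  have swap : ∑ z : X, (Finset.univ.filter fun u => S.R a x u ∧ S.R b u z).card
      = S.k a * S.k b := by
    simp only [Finset.card_filter]
    rw [Finset.sum_comm]
    have step : ∀ u : X, (∑ z : X, if S.R a x u ∧ S.R b u z then 1 else 0)
        = if S.R a x u then S.k b else 0 := by
      intro u
      by_cases hu : S.R a x u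
      · simp only [hu, true_and, if_pos]
        rw [← sphere_card S u b, Finset.card_filter]
      · simp [hu]
    rw [Finset.sum_congr rfl fun u _ => step u, ← Finset.sum_filter,
      Finset.sum_const, smul_eq_mul, sphere_card]
  calc ∑ c, S.p a b c * S.k c
      = ∑ c, ∑ z : X, (if S.R c x z then S.p a b c else 0) := by
        refine Finset.sum_congr rfl fun c _ => ?_
        rw [← Finset.sum_filter, Finset.sum_const, smul_eq_mul, sphere_card, mul_comm]
    _ = ∑ z : X, ∑ c, (if S.R c x z then S.p a b c else 0) := Finset.sum_comm
    _ = ∑ z : X, (Finset.univ.filter fun u => S.R a x u ∧ S.R b u z).card := by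
        refine Finset.sum_congr rfl fun z _ => (key z).symm
    _ = S.k a * S.k b := swap

lemma unique_p_pos (a b : Fin (d + 1)) (hmin : min (S.k a) (S.k b) = 1)
    {c1 c2 : Fin (d + 1)} (hp1 : 0 < S.p a b c1) (hp2 : 0 < S.p a b c2) : c1 = c2 := by
  by_contra hne
  have hk : ∀ c, 0 < S.p a b c → S.k a * S.k b ≤ S.k c := by
    intro c hc
    obtain ⟨x, u, z, ha, hb, hcz⟩ := (p_pos_iff S a b c).1 hc
    rcases min_cases (S.k a) (S.k b) with ⟨heq, -⟩ | ⟨heq, -⟩ <;> rw [hmin] at heq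
    · -- k a = 1
      have hpos : 0 < S.p (S.inv a) c b := (p_pos_iff S _ _ _).2
        ⟨u, x, z, (S.inv_spec a u x).2 ha, hcz, hb⟩
      have hle : S.p (S.inv a) c b * S.k b ≤ ∑ e, S.p (S.inv a) c e * S.k e :=
        Finset.single_le_sum (f := fun e => S.p (S.inv a) c e * S.k e)
          (fun e _ => Nat.zero_le _) (Finset.mem_univ b)
      rw [sum_p_mul_k, k_inv, ← heq, one_mul] at hle
      calc S.k a * S.k b = S.k b := by rw [← heq, one_mul]
        _ ≤ S.p (S.inv a) c b * S.k b := Nat.le_mul_of_pos_left _ hpos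
        _ ≤ S.k c := hle
    · -- k b = 1
      have hpos : 0 < S.p c (S.inv b) a := (p_pos_iff S _ _ _).2
        ⟨x, z, u, hcz, (S.inv_spec b z u).2 hb, ha⟩
      have hle : S.p c (S.inv b) a * S.k a ≤ ∑ e, S.p c (S.inv b) e * S.k e :=
        Finset.single_le_sum (f := fun e => S.p c (S.inv b) e * S.k e)
          (fun e _ => Nat.zero_le _) (Finset.mem_univ a)
      rw [sum_p_mul_k, k_inv, ← heq, mul_one] at hle
      calc S.k a * S.k b = S.k a := by rw [← heq, mul_one]
        _ ≤ S.p c (S.inv b) a * S.k a := Nat.le_mul_of_pos_left _ hpos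
        _ ≤ S.k c := hle
  have hsum := sum_p_mul_k S a b
  have hle2 : S.p a b c1 * S.k c1 + S.p a b c2 * S.k c2 ≤ ∑ c, S.p a b c * S.k c := by
    have hp := Finset.sum_pair (f := fun c => S.p a b c * S.k c) hne
    rw [← hp]
    exact Finset.sum_le_sum_of_subset (Finset.subset_univ _)
  have t1 : S.k a * S.k b ≤ S.p a b c1 * S.k c1 :=
    le_trans (hk c1 hp1) (Nat.le_mul_of_pos_left _ hp1)
  have t2 : S.k a * S.k b ≤ S.p a b c2 * S.k c2 :=
    le_trans (hk c2 hp2) (Nat.le_mul_of_pos_left _ hp2)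
  have hpos : 0 < S.k a * S.k b := Nat.mul_pos (k_pos S a) (k_pos S b)
  omega

variable (F : Type) [Field F]

lemma triple_apply (x : X) (a b c : Fin (d + 1)) (u v : X) :
    (S.dualIdem F x a * S.adj F b * S.dualIdem F x c) u v
      = (if S.R a x u then (1 : F) else 0) * (if S.R b u v then 1 else 0)
          * (if S.R c x v then 1 else 0) := by
  simp only [AssocScheme.dualIdem, AssocScheme.adj, Matrix.mul_diagonal,
    Matrix.diagonal_mul, Matrix.of_apply]

lemma triple_ne_zero {x : X} {a b c : Fin (d + 1)}
    (h : S.dualIdem F x a * S.adj F b * S.dualIdem F x c ≠ 0) :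
    ∃ u v, S.R a x u ∧ S.R b u v ∧ S.R c x v := by
  by_contra hcon
  push_neg at hcon
  apply h
  ext u v
  rw [triple_apply, Matrix.zero_apply]
  by_cases ha : S.R a x u
  · by_cases hb : S.R b u v
    · have := hcon u v ha hb
      simp [this]
    · simp [hb]
  · simp [ha]

end Aux
section Main
set_option linter.unusedSectionVars false
variable {X : Type} [Fintype X] [DecidableEq X] {d : ℕ} (S : AssocScheme X d)
  (F : Type) [Field F]

lemma mul_dual_apply (M : Matrix X X F) (x : X) (c : Fin (d + 1)) (u v : X) :
    (M * S.dualIdem F x c) u v = M u v * (if S.R c x v then 1 else 0) :=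
  Matrix.mul_diagonal _ _ _ _

lemma dual_mul_apply (M : Matrix X X F) (x : X) (c : Fin (d + 1)) (u v : X) :
    (S.dualIdem F x c * M) u v = (if S.R c x u then 1 else 0) * M u v :=
  Matrix.diagonal_mul _ _ _ _

lemma EAAE_apply (x : X) (a b c e : Fin (d + 1)) (u v : X) :
    (S.dualIdem F x a * S.adj F b * S.adj F c * S.dualIdem F x e) u v
      = ∑ z : X, (if S.R a x u then (1 : F) else 0) * (if S.R b u z then 1 else 0)
          * (if S.R c z v then 1 else 0) * (if S.R e x v then 1 else 0) := by
  rw [mul_dual_apply, Matrix.mul_apply, Finset.sum_mul]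
  refine Finset.sum_congr rfl fun z _ => ?_
  rw [dual_mul_apply]
  simp only [AssocScheme.adj, Matrix.of_apply]

lemma EAEAE_apply (x : X) (a b c e f : Fin (d + 1)) (u v : X) :
    (S.dualIdem F x a * S.adj F b * S.dualIdem F x c * S.adj F e * S.dualIdem F x f) u v
      = ∑ z : X, (if S.R a x u then (1 : F) else 0) * (if S.R b u z then 1 else 0)
          * (if S.R c x z then 1 else 0) * (if S.R e z v then 1 else 0)
          * (if S.R f x v then 1 else 0) := by
  rw [mul_dual_apply, Matrix.mul_apply, Finset.sum_mul]
  refine Finset.sum_congr rfl fun z _ => ?_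
  rw [triple_apply]
  simp only [AssocScheme.adj, Matrix.of_apply]

end Main

/-- triple product identity when one of the extreme valencies is one. -/
theorem stmt_5 {X : Type} [Fintype X] [DecidableEq X] {d : ℕ} (S : AssocScheme X d)
    (F : Type) [Field F] (x : X) (i j l m n : Fin (d + 1))
    (h1 : S.dualIdem F x i * S.adj F j * S.dualIdem F x l ≠ 0)
    (h2 : S.dualIdem F x l * S.adj F m * S.dualIdem F x n ≠ 0)
    (h3 : min (S.k i) (S.k j) = 1 ∨ min (S.k m) (S.k n) = 1) :
    S.dualIdem F x i * S.adj F j * S.dualIdem F x l * S.adj F m * S.dualIdem F x n =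
      S.dualIdem F x i * S.adj F j * S.adj F m * S.dualIdem F x n ∧
    S.dualIdem F x i * S.adj F j * S.adj F m * S.dualIdem F x n =
      ∑ kk : Fin (d + 1),
        ((S.p j m kk : F)) • (S.dualIdem F x i * S.adj F kk * S.dualIdem F x n) := by
  obtain ⟨u1, v1, hi1, hj1, hl1⟩ := triple_ne_zero S F h1
  obtain ⟨u2, v2, hl2, hm2, hn2⟩ := triple_ne_zero S F h2
  have key : ∀ u z v, S.R i x u → S.R j u z → S.R m z v → S.R n x v → S.R l x z := by
    intro u z v hiu hjz hmz hnv
    obtain ⟨l', hl', -⟩ := S.partition x z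
    rcases h3 with hmin | hmin
    · have hp1 : 0 < S.p i j l := (p_pos_iff S i j l).2 ⟨x, u1, v1, hi1, hj1, hl1⟩
      have hp2 : 0 < S.p i j l' := (p_pos_iff S i j l').2 ⟨x, u, z, hiu, hjz, hl'⟩
      rwa [unique_p_pos S i j hmin hp2 hp1] at hl'
    · have hmin' : min (S.k n) (S.k (S.inv m)) = 1 := by
        rw [k_inv, min_comm]; exact hmin
      have hp1 : 0 < S.p n (S.inv m) l := (p_pos_iff S _ _ _).2
        ⟨x, v2, u2, hn2, (S.inv_spec m v2 u2).2 hm2, hl2⟩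
      have hp2 : 0 < S.p n (S.inv m) l' := (p_pos_iff S _ _ _).2
        ⟨x, v, z, hnv, (S.inv_spec m v z).2 hmz, hl'⟩
      rwa [unique_p_pos S n (S.inv m) hmin' hp2 hp1] at hl'
  constructor
  · ext u v
    rw [EAEAE_apply, EAAE_apply]
    refine Finset.sum_congr rfl fun z _ => ?_
    by_cases hiu : S.R i x u
    · by_cases hjz : S.R j u z
      · by_cases hmz : S.R m z v
        · by_cases hnv : S.R n x v
          · have hlz := key u z v hiu hjz hmz hnv
            simp [hiu, hjz, hmz, hnv, hlz]
          · simp [hnv]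
        · simp [hmz]
      · simp [hjz]
    · simp [hiu]
  · ext u v
    rw [EAAE_apply]
    simp only [Matrix.sum_apply, Matrix.smul_apply, smul_eq_mul, triple_apply]
    obtain ⟨c0, hc0, hcu⟩ := S.partition u v
    by_cases hiu : S.R i x u
    · by_cases hnv : S.R n x v
      · simp only [hiu, hnv, if_pos, one_mul, mul_one]
        have hL : (∑ z : X, (if S.R j u z then (1 : F) else 0)
            * (if S.R m z v then 1 else 0)) = (S.p j m c0 : F) := by
          have e1 : ∀ z : X, (if S.R j u z then (1 : F) else 0)
              * (if S.R m z v then 1 else 0)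
              = if S.R j u z ∧ S.R m z v then 1 else 0 := by
            intro z
            split_ifs with h1 h2 h3 <;> simp_all
          rw [Finset.sum_congr rfl fun z _ => e1 z, Finset.sum_boole,
            ← p_card S j m c0 hc0]
        have hR : (∑ kk : Fin (d + 1), (S.p j m kk : F)
            * (if S.R kk u v then (1 : F) else 0)) = (S.p j m c0 : F) := by
          rw [Finset.sum_eq_single c0]
          · simp [hc0]
          · intro c _ hne
            have : ¬ S.R c u v := fun hcv => hne (hcu c hcv)
            simp [this]
          · simp
        rw [hL.trans hR.symm]
      · simp [hnv]
    · simp [hiu]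
end

section
/- With notation as for Terwilliger algebras: if R_{i'} R_ℓ = {R_j} (the complex product is a singleton), then for any relation R_m, E_i^* A_m E_ℓ^* ≠ O if and only if m = j; moreover E_i^* A_j E_ℓ^* = E_i^* J E_ℓ^*, where J is the all-ones matrix. -/
open scoped Classical

namespace AssocScheme

variable {X : Type} [Fintype X] [DecidableEq X] {d : ℕ}

lemma exists_rel (S : AssocScheme X d) (a : Fin (d + 1)) (x : X) : ∃ v, S.R a x v := by
  obtain ⟨p, q, hpq⟩ := S.rel_nonempty a
  have h1 := S.p_spec a (S.inv a) 0 p p ((S.diag p p).mpr rfl)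
  have h2 := S.p_spec a (S.inv a) 0 x x ((S.diag x x).mpr rfl)
  have hpos : 0 < S.p a (S.inv a) 0 := by
    rw [← h1, Set.ncard_pos (Set.toFinite _)]
    exact ⟨q, hpq, (S.inv_spec a q p).mpr hpq⟩
  rw [← h2] at hpos
  obtain ⟨z, hz, -⟩ := (Set.ncard_pos (Set.toFinite _)).mp hpos
  exact ⟨z, hz⟩

lemma key_unique (S : AssocScheme X d) {i j l : Fin (d + 1)}
    (h : {c : Fin (d + 1) | 0 < S.p (S.inv i) l c} = {j})
    {x u v : X} (hu : S.R i x u) (hv : S.R l x v) {m : Fin (d + 1)} (hm : S.R m u v) :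
    m = j := by
  have hpos : 0 < S.p (S.inv i) l m := by
    rw [← S.p_spec (S.inv i) l m u v hm, Set.ncard_pos (Set.toFinite _)]
    exact ⟨x, (S.inv_spec i u x).mpr hu, hv⟩
  have : m ∈ ({j} : Set (Fin (d + 1))) := h ▸ hpos
  exact this

lemma key_exists (S : AssocScheme X d) {i j l : Fin (d + 1)}
    (h : {c : Fin (d + 1) | 0 < S.p (S.inv i) l c} = {j}) (x : X) :
    ∃ u v, S.R i x u ∧ S.R j u v ∧ S.R l x v := by
  have hj : 0 < S.p (S.inv i) l j := by
    have : j ∈ {c : Fin (d + 1) | 0 < S.p (S.inv i) l c} := h ▸ rfl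
    exact this
  -- get a triangle witnessing p_{i'l}^j > 0
  obtain ⟨u0, v0, huv0⟩ := S.rel_nonempty j
  have := S.p_spec (S.inv i) l j u0 v0 huv0
  rw [← this, Set.ncard_pos (Set.toFinite _)] at hj
  obtain ⟨z0, hz1, hz2⟩ := hj
  have hz1' : S.R i z0 u0 := (S.inv_spec i u0 z0).mp hz1
  -- so p_{ij}^l > 0
  have hpl : 0 < S.p i j l := by
    rw [← S.p_spec i j l z0 v0 hz2, Set.ncard_pos (Set.toFinite _)]
    exact ⟨u0, hz1', huv0⟩
  -- get v with R_l x v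
  obtain ⟨v, hv⟩ := S.exists_rel l x
  rw [← S.p_spec i j l x v hv, Set.ncard_pos (Set.toFinite _)] at hpl
  obtain ⟨u, hu1, hu2⟩ := hpl
  exact ⟨u, v, hu1, hu2, hv⟩

lemma entry_eq (S : AssocScheme X d) (F : Type) [Field F] (x : X)
    (i m l : Fin (d + 1)) (u v : X) :
    (S.dualIdem F x i * S.adj F m * S.dualIdem F x l) u v =
      (if S.R i x u then (1 : F) else 0) * (if S.R m u v then 1 else 0) *
        (if S.R l x v then 1 else 0) := by
  simp [dualIdem, adj, Matrix.mul_diagonal, Matrix.diagonal_mul]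

end AssocScheme

open AssocScheme

/-- when the complex product `R_{i'} R_ℓ` is the singleton `{R_j}`. -/
theorem stmt_6 {X : Type} [Fintype X] [DecidableEq X] {d : ℕ} (S : AssocScheme X d)
    (F : Type) [Field F] (x : X) (i j l : Fin (d + 1))
    (h : {c : Fin (d + 1) | 0 < S.p (S.inv i) l c} = {j}) :
    (∀ m, S.dualIdem F x i * S.adj F m * S.dualIdem F x l ≠ 0 ↔ m = j) ∧
    S.dualIdem F x i * S.adj F j * S.dualIdem F x l =
      S.dualIdem F x i * allOnes X F * S.dualIdem F x l := by
  constructor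
  · intro m
    constructor
    · intro hne
      by_contra hmj
      apply hne
      ext u v
      rw [S.entry_eq F x i m l u v]
      by_cases h1 : S.R i x u
      · by_cases h2 : S.R l x v
        · have : ¬ S.R m u v := fun hm => hmj (S.key_unique h h1 h2 hm)
          simp [this]
        · simp [h2]
      · simp [h1]
    · rintro rfl
      obtain ⟨u, v, h1, h2, h3⟩ := S.key_exists h x
      intro h0
      have := S.entry_eq F x i m l u v
      rw [h0] at this
      simp [h1, h2, h3] at this
  · ext u v
    rw [S.entry_eq F x i j l u v]
    by_cases h1 : S.R i x u
    · by_cases h2 : S.R l x v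
      · have hj : S.R j u v := by
          obtain ⟨m, hm, -⟩ := S.partition u v
          exact S.key_unique h h1 h2 hm ▸ hm
        simp [dualIdem, allOnes, Matrix.mul_diagonal, Matrix.diagonal_mul, h1, h2, hj]
      · simp [dualIdem, allOnes, Matrix.mul_diagonal, Matrix.diagonal_mul, h2]
    · simp [dualIdem, allOnes, Matrix.mul_diagonal, Matrix.diagonal_mul, h1]
end

section
/- Let S be a thin association scheme (all valencies equal 1) on finite set X, and let T be the Terwilliger F-algebra of S with respect to any vertex x. Then T = M_X(F), the full matrix algebra. -/
open scoped Classical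

open AssocScheme

/-- the Terwilliger algebra of a thin scheme is the full matrix algebra. -/
theorem stmt_9 {X : Type} [Fintype X] [DecidableEq X] {d : ℕ} (S : AssocScheme X d)
    (F : Type) [Field F] (x : X) (hthin : ∀ a, S.k a = 1) :
    S.Terw F x = ⊤ := by
  -- each relation has a unique "neighbor" of x
  have hsingle : ∀ a : Fin (d + 1), ∀ u v : X, S.R a x u → S.R a x v → u = v := by
    intro a u v hu hv
    have h0 : S.R 0 x x := (S.diag x x).mpr rfl
    have hp := S.p_spec a (S.inv a) 0 x x h0
    have hset : {z | S.R a x z ∧ S.R (S.inv a) z x} = {z | S.R a x z} := by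
      ext z; simp [S.inv_spec]
    rw [hset] at hp
    have h1 : {z | S.R a x z}.ncard = 1 := by rw [hp]; exact hthin a
    obtain ⟨w, hw⟩ := Set.ncard_eq_one.mp h1
    have hu' : u ∈ {z | S.R a x z} := hu
    have hv' : v ∈ {z | S.R a x z} := hv
    rw [hw] at hu' hv'
    simp at hu' hv'
    rw [hu', hv']
  have hmemE : ∀ u : X, Matrix.single u u (1 : F) ∈ S.Terw F x := by
    intro u
    obtain ⟨a, ha, -⟩ := S.partition x u
    have heq : S.dualIdem F x a = Matrix.single u u 1 := by
      ext i j
      simp only [AssocScheme.dualIdem, Matrix.diagonal, Matrix.single,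
        Matrix.of_apply]
      by_cases hij : i = j
      · subst hij
        by_cases hR : S.R a x i
        · have : u = i := hsingle a u i ha hR
          simp [this, hR]
        · have : ¬ (u = i) := fun h => hR (h ▸ ha)
          simp [hR, this]
      · simp only [if_neg hij]
        by_cases h1 : u = i
        · by_cases h2 : u = j
          · exact absurd (h1 ▸ h2) hij
          · simp [h1, h2, hij]
        · simp [h1, hij]
    rw [← heq]
    exact Algebra.subset_adjoin (Or.inr ⟨a, rfl⟩)
  have hmemUV : ∀ u v : X, Matrix.single u v (1 : F) ∈ S.Terw F x := by
    intro u v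
    obtain ⟨c, hc, -⟩ := S.partition u v
    have hkey : Matrix.single u u (1 : F) * S.adj F c *
        Matrix.single v v 1 = Matrix.single u v 1 := by
      have hdiag : ∀ w : X, Matrix.single w w (1 : F) =
          Matrix.diagonal (fun z => if w = z then 1 else 0) := by
        intro w
        ext i j
        simp only [Matrix.single, Matrix.diagonal, Matrix.of_apply]
        by_cases h1 : w = i <;> by_cases h2 : i = j <;> simp [h1, h2] <;>
          simp_all
      rw [hdiag u, hdiag v]
      ext i j
      simp only [Matrix.diagonal_mul, Matrix.mul_diagonal, AssocScheme.adj,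
        Matrix.of_apply, Matrix.single]
      by_cases h1 : u = i <;> by_cases h2 : v = j <;>
        simp_all [ite_and]
    rw [← hkey]
    exact mul_mem (mul_mem (hmemE u) (Algebra.subset_adjoin (Or.inl ⟨c, rfl⟩)))
      (hmemE v)
  rw [eq_top_iff]
  intro M _
  rw [Matrix.matrix_eq_sum_single M]
  refine sum_mem fun i _ => sum_mem fun j _ => ?_
  have : Matrix.single i j (M i j) = M i j • Matrix.single i j (1 : F) := by
    rw [Matrix.smul_single, smul_eq_mul, mul_one]
  rw [this]
  exact SMulMemClass.smul_mem _ (hmemUV i j)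
end

section
/- Let S be a quasi-thin association scheme over a field F of characteristic ≠ 2. Then the Terwilliger F-algebra T of S with respect to any vertex is semisimple (its Jacobson radical is zero). -/
open scoped Classical

open AssocScheme

/-! `T` is closed under transposition, so the dot-product orthogonal complement of a `T`-submodule
`W` of the standard module `F^X` is again a `T`-submodule, and it is a complement of `W` as soon as
no nonzero `w ∈ W` has `w ⬝ M w = 0` for all `M ∈ T`. Quasi-thinness rules such `w` out: each
subconstituent `R_i(x)` has at most two points, and if it is `{u, c}` then the relation `R_b`
containing `(u, c)` also contains `(c, u)`, so `E_i^*` and `E_i^* A_b E_i^*` give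
`w_u² + w_c² = 0` and `2 w_u w_c = 0`, whence `w_u = 0` when `char F ≠ 2`. Hence `F^X` is a
faithful semisimple module over the Artinian ring `T`, so the Jacobson radical of `T` vanishes. -/

theorem IsSemisimpleRing.of_faithfulSMul (R M : Type*) [Ring R] [IsArtinianRing R]
    [AddCommGroup M] [Module R M] [FaithfulSMul R M] [IsSemisimpleModule R M] :
    IsSemisimpleRing R :=
  IsArtinianRing.isSemisimpleRing_iff_jacobson.mpr <| le_bot_iff.mp <|
    (IsSemisimpleModule.jacobson_le_annihilator R M).trans
      (Module.annihilator_eq_bot.mpr ‹_›).le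

namespace Matrix

instance {n R : Type*} [Fintype n] [DecidableEq n] [Semiring R] :
    FaithfulSMul (Matrix n n R) (n → R) :=
  ⟨ext_iff_smul.mpr⟩

variable {n F : Type*} [Fintype n] [DecidableEq n] [Field F]

theorem dotProduct_diagonal_mul_mul_diagonal_mulVec (s : Finset n) (M : Matrix n n F)
    (w : n → F) :
    w ⬝ᵥ ((diagonal (fun u => if u ∈ s then 1 else 0) * M *
      diagonal (fun u => if u ∈ s then 1 else 0)) *ᵥ w) =
      ∑ a ∈ s, ∑ b ∈ s, w a * M a b * w b := by
  simp only [dotProduct, mulVec, mul_diagonal, diagonal_mul, Finset.mul_sum, mul_ite, ite_mul,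
    mul_one, mul_zero, zero_mul, Finset.sum_ite_mem, Finset.univ_inter, Finset.sum_ite_irrel,
    Finset.sum_const_zero]
  exact Finset.sum_congr rfl fun a _ => Finset.sum_congr rfl fun b _ => by ring

theorem isSemisimpleModule_of_forall_transpose_mem {A : Subalgebra F (Matrix n n F)}
    (transpose_mem : ∀ M ∈ A, Mᵀ ∈ A)
    (anisotropic : ∀ w : n → F, (∀ M ∈ A, w ⬝ᵥ (M *ᵥ w) = 0) → w = 0) :
    IsSemisimpleModule A (n → F) := by
  refine { exists_isCompl := fun W => ?_ }
  let B : LinearMap.BilinForm F (n → F) := dotProductBilin F F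
  have hB : B.IsRefl := fun v w h => by rwa [dotProductBilin_apply_apply, dotProduct_comm]
  let Wperp : Submodule A (n → F) :=
    { B.orthogonal (W.restrictScalars F) with
      smul_mem' := fun M v hv u hu => by
        change u ⬝ᵥ (M.1 *ᵥ v) = 0
        rw [dotProduct_mulVec, ← mulVec_transpose]
        exact hv _ (W.smul_mem ⟨_, transpose_mem _ M.2⟩ hu) }
  refine ⟨Wperp, (Submodule.isCompl_restrictScalars_iff F).mp <|
    (LinearMap.BilinForm.isCompl_orthogonal_iff_disjoint hB).mpr ?_⟩
  refine Submodule.disjoint_def.mpr fun w hwW hwperp => anisotropic w fun M hM => ?_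
  exact hB _ _ (hwperp _ (W.smul_mem ⟨M, hM⟩ hwW))

theorem isSemisimpleRing_of_forall_transpose_mem {A : Subalgebra F (Matrix n n F)}
    (transpose_mem : ∀ M ∈ A, Mᵀ ∈ A)
    (anisotropic : ∀ w : n → F, (∀ M ∈ A, w ⬝ᵥ (M *ᵥ w) = 0) → w = 0) :
    IsSemisimpleRing A :=
  have : IsArtinianRing A := .of_finite F A
  have := isSemisimpleModule_of_forall_transpose_mem transpose_mem anisotropic
  .of_faithfulSMul A (n → F)

end Matrix

namespace AssocScheme

open Matrix

variable {X : Type} [Fintype X] {d : ℕ}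

section Subconstituents

variable (S : AssocScheme X d)

theorem not_R_self {b : Fin (d + 1)} (hb : b ≠ 0) (u : X) : ¬ S.R b u u :=
  fun h => hb ((S.partition u u).unique h ((S.diag u u).mpr rfl))

theorem transpose_adj (F : Type) [Field F] (b : Fin (d + 1)) :
    (S.adj F b)ᵀ = S.adj F (S.inv b) := by
  ext u v
  simp [adj, S.inv_spec]

/-- The subconstituent `R_i(x) = {z | (x, z) ∈ R_i}`. -/
noncomputable def nbhd (x : X) (i : Fin (d + 1)) : Finset X := {z | S.R i x z}

variable {S} {x : X} {i : Fin (d + 1)}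

@[simp]
theorem mem_nbhd {z : X} : z ∈ S.nbhd x i ↔ S.R i x z := by
  simp [nbhd]

theorem card_nbhd : (S.nbhd x i).card = S.k i := by
  rw [k, ← S.p_spec i (S.inv i) 0 x x ((S.diag x x).mpr rfl), ← Set.ncard_coe_finset]
  congr 1
  ext z
  simp [S.inv_spec]

theorem nbhd_eq_pair [DecidableEq X] (hqt : S.k i ≤ 2) {u c : X} (hu : u ∈ S.nbhd x i)
    (hc : c ∈ S.nbhd x i) (huc : u ≠ c) : S.nbhd x i = {u, c} :=
  (Finset.eq_of_subset_of_card_le (Finset.insert_subset hu (Finset.singleton_subset_iff.mpr hc))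
    (by rw [card_nbhd, Finset.card_pair huc]; exact hqt)).symm

theorem nbhd_eq_singleton_or_pair [DecidableEq X] (hqt : S.k i ≤ 2) {u : X}
    (hu : u ∈ S.nbhd x i) :
    S.nbhd x i = {u} ∨ ∃ c ∈ S.nbhd x i, u ≠ c ∧ S.nbhd x i = {u, c} := by
  by_cases hsingle : S.nbhd x i = {u}
  · exact .inl hsingle
  obtain ⟨c, hc, hcu⟩ : ∃ c ∈ S.nbhd x i, c ≠ u := by
    by_contra! h
    exact hsingle (Finset.eq_singleton_iff_unique_mem.mpr ⟨hu, h⟩)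
  exact .inr ⟨c, hc, hcu.symm, nbhd_eq_pair hqt hu hc hcu.symm⟩

theorem card_filter_R_nbhd (b : Fin (d + 1)) {a : X} (ha : a ∈ S.nbhd x i) :
    ((S.nbhd x i).filter (S.R b a)).card = S.p b (S.inv i) (S.inv i) := by
  rw [← S.p_spec b (S.inv i) (S.inv i) a x ((S.inv_spec i a x).mpr (mem_nbhd.mp ha)),
    ← Set.ncard_coe_finset]
  congr 1
  ext z
  simp [S.inv_spec, and_comm]

theorem R_symm_of_mem_nbhd [DecidableEq X] (hqt : S.k i ≤ 2) {u c : X} (hu : u ∈ S.nbhd x i)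
    (hc : c ∈ S.nbhd x i) (huc : u ≠ c) {b : Fin (d + 1)} (hb : S.R b u c) : S.R b c u := by
  have hb0 : b ≠ 0 := fun h => huc ((S.diag u c).mp (h ▸ hb))
  have hpair := nbhd_eq_pair hqt hu hc huc
  -- `u` and `c` have equally many `R_b`-successors in `R_i(x) = {u, c}`; those of `u` are `{c}`.
  have from_u : (S.nbhd x i).filter (S.R b u) = {c} := by
    rw [hpair, Finset.filter_insert, if_neg (S.not_R_self hb0 u), Finset.filter_singleton,
      if_pos hb]
  have from_c : ((S.nbhd x i).filter (S.R b c)).card = 1 := by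
    rw [card_filter_R_nbhd b hc, ← card_filter_R_nbhd b hu, from_u, Finset.card_singleton]
  obtain ⟨z, hz⟩ := Finset.card_eq_one.mp from_c
  have hzmem : z ∈ (S.nbhd x i).filter (S.R b c) := hz ▸ Finset.mem_singleton_self z
  rw [hpair, Finset.mem_filter, Finset.mem_insert, Finset.mem_singleton] at hzmem
  obtain ⟨rfl | rfl, hRz⟩ := hzmem
  · exact hRz
  · exact absurd hRz (S.not_R_self hb0 z)

end Subconstituents

section Terwilliger

variable [DecidableEq X] (S : AssocScheme X d) (F : Type) [Field F] (x : X)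

theorem adj_mem_Terw (b : Fin (d + 1)) : S.adj F b ∈ S.Terw F x :=
  Algebra.subset_adjoin (Set.mem_union_left _ ⟨b, rfl⟩)

theorem dualIdem_mem_Terw (a : Fin (d + 1)) : S.dualIdem F x a ∈ S.Terw F x :=
  Algebra.subset_adjoin (Set.mem_union_right _ ⟨a, rfl⟩)

theorem dualIdem_eq (a : Fin (d + 1)) :
    S.dualIdem F x a = diagonal fun u => if u ∈ S.nbhd x a then 1 else 0 := by
  simp [dualIdem]

theorem transpose_mem_Terw {M : Matrix X X F} (hM : M ∈ S.Terw F x) : Mᵀ ∈ S.Terw F x := by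
  induction hM using Algebra.adjoin_induction with
  | mem M hM =>
    obtain ⟨b, rfl⟩ | ⟨a, rfl⟩ := hM
    · rw [transpose_adj]
      exact S.adj_mem_Terw F x _
    · rw [dualIdem, diagonal_transpose]
      exact S.dualIdem_mem_Terw F x a
  | algebraMap r => simpa [Algebra.algebraMap_eq_smul_one] using (S.Terw F x).algebraMap_mem r
  | add M N _ _ hM hN => simpa using add_mem hM hN
  | mul M N _ _ hM hN => simpa using mul_mem hN hM

variable {S F x}

theorem eq_zero_of_forall_dotProduct_mulVec_Terw (hqt : ∀ a, S.k a ≤ 2)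
    (hchar : ringChar F ≠ 2) (w : X → F) (hw : ∀ M ∈ S.Terw F x, w ⬝ᵥ (M *ᵥ w) = 0) :
    w = 0 := by
  funext u
  obtain ⟨i, hu, -⟩ := S.partition x u
  replace hu : u ∈ S.nbhd x i := mem_nbhd.mpr hu
  have quad (M : Matrix X X F) (hM : M ∈ S.Terw F x) :
      ∑ a ∈ S.nbhd x i, ∑ b ∈ S.nbhd x i, w a * M a b * w b = 0 := by
    rw [← dotProduct_diagonal_mul_mul_diagonal_mulVec, ← dualIdem_eq]
    exact hw _ (mul_mem (mul_mem (S.dualIdem_mem_Terw F x i) hM) (S.dualIdem_mem_Terw F x i))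
  have squares : ∑ a ∈ S.nbhd x i, w a * w a = 0 := by
    simpa [one_apply, -mem_nbhd] using quad 1 (one_mem _)
  obtain hsingle | ⟨c, hc, huc, hpair⟩ := nbhd_eq_singleton_or_pair (hqt i) hu
  · simpa [hsingle] using squares
  rw [hpair, Finset.sum_pair huc] at squares
  obtain ⟨b, hb, -⟩ := S.partition u c
  have hb0 : b ≠ 0 := fun h => huc ((S.diag u c).mp (h ▸ hb))
  have cross : w u * w c + w c * w u = 0 := by
    simpa [hpair, huc, adj, hb, R_symm_of_mem_nbhd (hqt i) hu hc huc hb, S.not_R_self hb0]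
      using quad (S.adj F b) (S.adj_mem_Terw F x b)
  have hprod : w u * w c = 0 :=
    (mul_eq_zero.mp (by linear_combination cross : (2 : F) * (w u * w c) = 0)).resolve_left
      (Ring.two_ne_zero hchar)
  exact pow_eq_zero_iff four_ne_zero |>.mp
    (by linear_combination w u ^ 2 * squares - w u * w c * hprod : w u ^ 4 = 0)

end Terwilliger

end AssocScheme

/-- the Terwilliger algebra of a quasi-thin scheme over a field of
characteristic `≠ 2` is semisimple (its Jacobson radical is zero). -/
theorem stmt_14 {X : Type} [Fintype X] [DecidableEq X] {d : ℕ} (S : AssocScheme X d)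
    (F : Type) [Field F] (x : X) (hqt : ∀ a, S.k a ≤ 2) (hchar : ringChar F ≠ 2) :
    Ideal.jacobson (⊥ : Ideal (S.Terw F x)) = ⊥ ∧ IsSemisimpleRing (S.Terw F x) := by
  have : IsSemisimpleRing (S.Terw F x) :=
    Matrix.isSemisimpleRing_of_forall_transpose_mem (fun _ => S.transpose_mem_Terw F x)
      (eq_zero_of_forall_dotProduct_mulVec_Terw hqt hchar)
  exact ⟨Ideal.jacobson_bot.trans (IsSemisimpleRing.jacobson_eq_bot _), this⟩
end

section
/- Let S be a quasi-thin association scheme. Define U to be the set of pairs (g,h) with either k_g = k_h = |R_{g'}R_h| = 2, or (g,h) a bad pair of S. If (a,b) ∈ U then (b,a) ∈ U. -/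
open scoped Classical

open AssocScheme

/-- `(u, v)` is a bad pair of `S`. -/
def AssocScheme.IsBadPair {X : Type} [Fintype X] {d : ℕ} (S : AssocScheme X d)
    (u v : Fin (d + 1)) : Prop :=
  ∃ a : ℕ, 1 ≤ a ∧ ∃ i j l : ℕ → Fin (d + 1),
    i 0 = u ∧ l a = v ∧
    (∀ b ≤ a, S.k (i b) = 2 ∧ S.k (l b) = 2 ∧ S.p (i b) (j b) (l b) = 1) ∧
    S.nProd (S.inv (i 0)) (l a) = 1 ∧
    ∀ c < a, l c = i (c + 1)

/-- the relation `U`: either `k_g = k_h = |R_{g'} R_h| = 2`, or `(g,h)` is a bad pair -/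
def AssocScheme.URel {X : Type} [Fintype X] {d : ℕ} (S : AssocScheme X d)
    (g h : Fin (d + 1)) : Prop :=
  (S.k g = 2 ∧ S.k h = 2 ∧ S.nProd (S.inv g) h = 2) ∨ S.IsBadPair g h

namespace AssocScheme
variable {X : Type} [Fintype X] {d : ℕ} (S : AssocScheme X d)

lemma inv_inv (i : Fin (d + 1)) : S.inv (S.inv i) = i := by
  obtain ⟨x, y, hxy⟩ := S.rel_nonempty i
  have h2 : S.R (S.inv (S.inv i)) x y := by
    rw [S.inv_spec, S.inv_spec]; exact hxy
  obtain ⟨c, _, hc⟩ := S.partition x y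
  rw [hc _ h2, hc _ hxy]

lemma card_filter_p (i j k : Fin (d + 1)) (x y : X) (h : S.R k x y) :
    (Finset.univ.filter fun z => S.R i x z ∧ S.R j z y).card = S.p i j k := by
  rw [← S.p_spec i j k x y h, Set.ncard_eq_toFinset_card']
  congr 1
  ext z
  simp

lemma valency (a : Fin (d + 1)) (x : X) :
    (Finset.univ.filter fun y => S.R a x y).card = S.k a := by
  have h0 : S.R 0 x x := (S.diag x x).mpr rfl
  rw [k, ← S.card_filter_p a (S.inv a) 0 x x h0]
  congr 1
  ext z
  simp [S.inv_spec, and_self]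

lemma p_pos_transpose {i j k : Fin (d + 1)} (h : 0 < S.p i j k) :
    0 < S.p (S.inv j) (S.inv i) (S.inv k) := by
  obtain ⟨x, y, hxy⟩ := S.rel_nonempty k
  have h1 := S.p_spec i j k x y hxy
  have hne : {z | S.R i x z ∧ S.R j z y}.Nonempty :=
    Set.nonempty_of_ncard_ne_zero (by rw [h1]; omega)
  obtain ⟨z, hz1, hz2⟩ := hne
  have hyx : S.R (S.inv k) y x := by rw [S.inv_spec]; exact hxy
  have h2 := S.p_spec (S.inv j) (S.inv i) (S.inv k) y x hyx
  rw [← h2]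
  rw [Set.ncard_pos (Set.toFinite _)]
  exact ⟨z, by rw [S.inv_spec]; exact hz2, by rw [S.inv_spec]; exact hz1⟩

lemma nProd_inv_symm (g h : Fin (d + 1)) :
    S.nProd (S.inv g) h = S.nProd (S.inv h) g := by
  unfold nProd
  apply Finset.card_bij' (i := fun c _ => S.inv c) (j := fun c _ => S.inv c)
  · intro c hc
    simp only [Finset.mem_filter, Finset.mem_univ, true_and] at *
    have := S.p_pos_transpose hc
    rwa [S.inv_inv] at this
  · intro c hc
    simp only [Finset.mem_filter, Finset.mem_univ, true_and] at *
    have := S.p_pos_transpose hc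
    rwa [S.inv_inv] at this
  · intro c _; exact S.inv_inv c
  · intro c _; exact S.inv_inv c

lemma key_identity (i j l : Fin (d + 1)) :
    S.k l * S.p i j l = S.k i * S.p l (S.inv j) i := by
  obtain ⟨x, y0, hx⟩ := S.rel_nonempty 0
  have e1 : S.k l * S.p i j l =
      ∑ y : X, ∑ z : X, if S.R j z y ∧ S.R l x y ∧ S.R i x z then 1 else 0 := by
    rw [← S.valency l x, Finset.card_filter, Finset.sum_mul]
    apply Finset.sum_congr rfl
    intro y _
    by_cases hy : S.R l x y
    · simp only [hy, if_true, one_mul, true_and]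
      rw [← S.card_filter_p i j l x y hy, Finset.card_filter]
      apply Finset.sum_congr rfl
      intro z _
      by_cases h1 : S.R j z y <;> by_cases h2 : S.R i x z <;> simp [h1, h2]
    · simp [hy]
  have e2 : S.k i * S.p l (S.inv j) i =
      ∑ z : X, ∑ y : X, if S.R j z y ∧ S.R l x y ∧ S.R i x z then 1 else 0 := by
    rw [← S.valency i x, Finset.card_filter, Finset.sum_mul]
    apply Finset.sum_congr rfl
    intro z _
    by_cases hz : S.R i x z
    · simp only [hz, if_true, one_mul, and_true]
      rw [← S.card_filter_p l (S.inv j) i x z hz, Finset.card_filter]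
      apply Finset.sum_congr rfl
      intro y _
      have hj := S.inv_spec j y z
      by_cases h1 : S.R j z y <;> by_cases h2 : S.R l x y <;> simp [h1, h2, hj]
    · simp [hz]
  rw [e1, e2, Finset.sum_comm]

lemma p_reverse {i j l : Fin (d + 1)} (hki : S.k i = 2) (hkl : S.k l = 2)
    (hp : S.p i j l = 1) : S.p l (S.inv j) i = 1 := by
  have := S.key_identity i j l
  rw [hki, hkl, hp] at this
  omega

end AssocScheme

/-- for a quasi-thin scheme, `U` is symmetric. -/
theorem stmt_16 {X : Type} [Fintype X] {d : ℕ} (S : AssocScheme X d)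
    (hqt : ∀ a, S.k a ≤ 2) (a b : Fin (d + 1)) (hab : S.URel a b) : S.URel b a := by
  rcases hab with ⟨hka, hkb, hn⟩ | ⟨n, hn1, i, j, l, hi0, hln, hchain, hp, hcons⟩
  · exact Or.inl ⟨hkb, hka, by rw [S.nProd_inv_symm]; exact hn⟩
  · right
    refine ⟨n, hn1, (fun c => l (n - c)), (fun c => S.inv (j (n - c))),
      (fun c => i (n - c)), ?_, ?_, ?_, ?_, ?_⟩
    · simp only [Nat.sub_zero]; exact hln
    · simp only [Nat.sub_self]; exact hi0
    · intro c hc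
      obtain ⟨h1, h2, h3⟩ := hchain (n - c) (by omega)
      exact ⟨h2, h1, S.p_reverse h1 h2 h3⟩
    · simp only [Nat.sub_zero, Nat.sub_self]
      rw [S.nProd_inv_symm]
      exact hp
    · intro c hc
      show i (n - c) = l (n - (c + 1))
      have e : n - (c + 1) = n - c - 1 := by omega
      rw [e, hcons (n - c - 1) (by omega)]
      congr 1
      omega
end

section
/- Let S be a p'-valenced association scheme (no valency divisible by char F = p), T its Terwilliger F-algebra with respect to vertex x, and J the Jacobson radical of T. Then for every relation R_a with k_a = 1 and every M ∈ J, one has E_a^* M = O and M E_a^* = O. -/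
open scoped Classical

open AssocScheme

namespace Stmt19Aux

/-- an idempotent in the Jacobson radical is zero -/
theorem idem_jac {R : Type*} [Ring R] {e : R}
    (he : e ∈ Ideal.jacobson (⊥ : Ideal R)) (h2 : e * e = e) : e = 0 := by
  by_cases h : Ideal.span {1 - e} = (⊤ : Ideal R)
  · have h1 : (1 : R) ∈ Ideal.span ({1 - e} : Set R) := h ▸ Submodule.mem_top
    rw [Ideal.span, Submodule.mem_span_singleton] at h1
    obtain ⟨u, hu⟩ := h1
    rw [smul_eq_mul] at hu
    have he2 : e = u * (1 - e) * e := by rw [hu, one_mul]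
    rwa [mul_assoc, sub_mul, one_mul, h2, sub_self, mul_zero] at he2
  · obtain ⟨Mx, hMx, hle⟩ := Ideal.exists_le_maximal _ h
    have hjac : Ideal.jacobson (⊥ : Ideal R) ≤ Mx := sInf_le ⟨bot_le, hMx⟩
    have h1e : 1 - e ∈ Mx := hle (Ideal.subset_span (Set.mem_singleton _))
    have hone : (1 : R) ∈ Mx := by
      have := Mx.add_mem h1e (hjac he); simpa using this
    exact absurd ((Ideal.eq_top_iff_one Mx).mpr hone) hMx.ne_top

variable {X : Type} [Fintype X] [DecidableEq X] {d : ℕ} (S : AssocScheme X d)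
  (F : Type) [Field F] (x : X)

private lemma class_unique {y z : Fin (d + 1)} {u : X} (hy : S.R y x u) (hz : S.R z x u) :
    y = z := by
  obtain ⟨i, _, hi⟩ := S.partition x u
  rw [hi y hy, hi z hz]

private lemma card_class (z : Fin (d + 1)) :
    (Finset.univ.filter fun u => S.R z x u).card = S.k z := by
  have h := S.p_spec z (S.inv z) 0 x x ((S.diag x x).mpr rfl)
  have hset : {w | S.R z x w ∧ S.R (S.inv z) w x} = {w | S.R z x w} := by
    ext w; simp [S.inv_spec]
  rw [hset, Set.ncard_eq_toFinset_card', Set.toFinset_setOf] at h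
  rw [h]; rfl

variable {S F x} in
private lemma kF_ne (hval : ∀ a, ¬ ((ringChar F : ℕ) ∣ S.k a)) (z : Fin (d + 1)) :
    ((S.k z : F)) ≠ 0 := fun h => hval z ((ringChar.spec F _).mp h)

variable {S F x} in
private lemma class_nonempty (hval : ∀ a, ¬ ((ringChar F : ℕ) ∣ S.k a)) (z : Fin (d + 1)) :
    ∃ u, S.R z x u := by
  by_contra h
  push_neg at h
  have h0 : S.k z = 0 := by
    rw [← card_class S x z]
    rw [Finset.card_eq_zero, Finset.filter_eq_empty_iff]
    exact fun u _ => h u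
  exact hval z (h0 ▸ dvd_zero _)

/-- the block all-ones matrix `E_y^* J E_z^*` -/
private noncomputable def U (y z : Fin (d + 1)) : Matrix X X F :=
  S.dualIdem F x y * allOnes X F * S.dualIdem F x z

/-- the central idempotent `f = Σ_z k_z⁻¹ E_z^* J E_z^*` -/
private noncomputable def f : Matrix X X F :=
  ∑ z, (S.k z : F)⁻¹ • U S F x z z

private lemma U_apply (y z : Fin (d + 1)) (u v : X) :
    U S F x y z u v = (if S.R y x u then 1 else 0) * (if S.R z x v then 1 else 0) := by
  unfold U dualIdem allOnes
  rw [Matrix.mul_diagonal, Matrix.diagonal_mul]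
  simp

private lemma ind_mul_ind (P Q : Prop) :
    ((if P then (1:F) else 0) * (if Q then 1 else 0)) = if P ∧ Q then 1 else 0 := by
  by_cases hP : P <;> by_cases hQ : Q <;> simp [hP, hQ]

private lemma U_mul_U (y z v w : Fin (d + 1)) :
    U S F x y z * U S F x v w = if z = v then (S.k z : F) • U S F x y w else 0 := by
  ext u t
  rw [Matrix.mul_apply]
  simp only [U_apply]
  have hterm : ∀ s : X,
      ((if S.R y x u then (1:F) else 0) * (if S.R z x s then 1 else 0)) *
        ((if S.R v x s then (1:F) else 0) * (if S.R w x t then 1 else 0)) =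
      ((if S.R z x s then (1:F) else 0) * (if S.R v x s then 1 else 0)) *
        ((if S.R y x u then (1:F) else 0) * (if S.R w x t then 1 else 0)) := by
    intro s; ring
  rw [Finset.sum_congr rfl (fun s _ => hterm s), ← Finset.sum_mul]
  by_cases h : z = v
  · subst h
    have : (∑ s : X, (if S.R z x s then (1:F) else 0) * (if S.R z x s then 1 else 0))
        = (S.k z : F) := by
      rw [Finset.sum_congr rfl (fun s _ => ind_mul_ind F _ _)]
      simp only [and_self]
      rw [Finset.sum_boole, card_class S x]
    rw [this, if_pos rfl, Matrix.smul_apply, U_apply, smul_eq_mul]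
    try ring
  · have : (∑ s : X, (if S.R z x s then (1:F) else 0) * (if S.R v x s then 1 else 0)) = 0 := by
      refine Finset.sum_eq_zero fun s _ => ?_
      rw [ind_mul_ind]
      rw [if_neg]
      rintro ⟨h1, h2⟩
      exact h (class_unique S x h1 h2)
    rw [this, zero_mul, if_neg h, Matrix.zero_apply]

variable {S F x} in
private lemma U_ne_zero (hval : ∀ a, ¬ ((ringChar F : ℕ) ∣ S.k a)) (y z : Fin (d + 1)) :
    U S F x y z ≠ 0 := by
  obtain ⟨u, hu⟩ := class_nonempty hval y
  obtain ⟨v, hv⟩ := class_nonempty hval z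
  intro h0
  have h1 : U S F x y z u v = 0 := by rw [h0]; rfl
  rw [U_apply, if_pos hu, if_pos hv, one_mul] at h1
  exact one_ne_zero h1

variable {S F x} in
private lemma f_mul_U (hval : ∀ a, ¬ ((ringChar F : ℕ) ∣ S.k a)) (y z : Fin (d + 1)) :
    f S F x * U S F x y z = U S F x y z := by
  unfold f
  rw [Finset.sum_mul]
  rw [Finset.sum_eq_single y]
  · rw [smul_mul_assoc, U_mul_U, if_pos rfl, smul_smul,
      inv_mul_cancel₀ (kF_ne hval y), one_smul]
  · intro w _ hw
    rw [smul_mul_assoc, U_mul_U, if_neg hw, smul_zero]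
  · intro h; exact absurd (Finset.mem_univ y) h

variable {S F x} in
private lemma U_mul_f (hval : ∀ a, ¬ ((ringChar F : ℕ) ∣ S.k a)) (y z : Fin (d + 1)) :
    U S F x y z * f S F x = U S F x y z := by
  unfold f
  rw [Finset.mul_sum]
  rw [Finset.sum_eq_single z]
  · rw [mul_smul_comm, U_mul_U, if_pos rfl, smul_smul,
      inv_mul_cancel₀ (kF_ne hval z), one_smul]
  · intro w _ hw
    rw [mul_smul_comm, U_mul_U, if_neg (Ne.symm hw), smul_zero]
  · intro h; exact absurd (Finset.mem_univ z) h

variable {S F x} in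
private lemma f_idem (hval : ∀ a, ¬ ((ringChar F : ℕ) ∣ S.k a)) :
    f S F x * f S F x = f S F x := by
  conv_lhs => rw [show f S F x * f S F x = ∑ z, (S.k z : F)⁻¹ • (f S F x * U S F x z z) by
    unfold f; rw [Finset.mul_sum]; exact Finset.sum_congr rfl fun z _ => (mul_smul_comm _ _ _)]
  exact Finset.sum_congr rfl fun z _ => by rw [f_mul_U hval]

set_option linter.unusedSectionVars false

private lemma A_mul_U (b z : Fin (d + 1)) :
    S.adj F b * U S F x z z = ∑ y, (S.p b (S.inv z) (S.inv y) : F) • U S F x y z := by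
  ext u v
  rw [Matrix.mul_apply, Matrix.sum_apply]
  simp only [U_apply, Matrix.smul_apply, smul_eq_mul]
  obtain ⟨y₀, hy₀, hy₀u⟩ := S.partition x u
  have hL : ∀ t : X, S.adj F b u t *
      ((if S.R z x t then (1:F) else 0) * (if S.R z x v then 1 else 0)) =
      ((if S.R b u t ∧ S.R z x t then (1:F) else 0)) * (if S.R z x v then 1 else 0) := by
    intro t
    show (if S.R b u t then (1:F) else 0) * _ = _
    rw [← mul_assoc, ind_mul_ind]
  rw [Finset.sum_congr rfl fun t _ => hL t, ← Finset.sum_mul, Finset.sum_boole]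
  have hcard : ((Finset.univ.filter fun t => S.R b u t ∧ S.R z x t).card : F)
      = (S.p b (S.inv z) (S.inv y₀) : F) := by
    have hp := S.p_spec b (S.inv z) (S.inv y₀) u x ((S.inv_spec y₀ u x).mpr hy₀)
    have hset : {t | S.R b u t ∧ S.R (S.inv z) t x} = {t | S.R b u t ∧ S.R z x t} := by
      ext t; simp [S.inv_spec]
    rw [hset, Set.ncard_eq_toFinset_card', Set.toFinset_setOf] at hp
    rw [hp]
  rw [hcard]
  have hR : (∑ y, (S.p b (S.inv z) (S.inv y) : F) *
      ((if S.R y x u then (1:F) else 0) * (if S.R z x v then 1 else 0)))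
      = (S.p b (S.inv z) (S.inv y₀) : F) * (if S.R z x v then 1 else 0) := by
    rw [Finset.sum_eq_single y₀]
    · rw [if_pos hy₀, one_mul]
    · intro y _ hy
      rw [if_neg (fun h => hy (hy₀u y h)), zero_mul, mul_zero]
    · intro h; exact absurd (Finset.mem_univ y₀) h
  rw [hR]

private lemma U_mul_A (b z : Fin (d + 1)) :
    U S F x z z * S.adj F b = ∑ y, (S.p z b y : F) • U S F x z y := by
  ext u v
  rw [Matrix.mul_apply, Matrix.sum_apply]
  simp only [U_apply, Matrix.smul_apply, smul_eq_mul]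
  obtain ⟨y₀, hy₀, hy₀v⟩ := S.partition x v
  have hL : ∀ t : X,
      ((if S.R z x u then (1:F) else 0) * (if S.R z x t then 1 else 0)) * S.adj F b t v =
      (if S.R z x u then (1:F) else 0) * (if S.R z x t ∧ S.R b t v then 1 else 0) := by
    intro t
    show _ * (if S.R b t v then (1:F) else 0) = _
    rw [mul_assoc, ind_mul_ind]
  rw [Finset.sum_congr rfl fun t _ => hL t, ← Finset.mul_sum, Finset.sum_boole]
  have hcard : ((Finset.univ.filter fun t => S.R z x t ∧ S.R b t v).card : F)
      = (S.p z b y₀ : F) := by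
    have hp := S.p_spec z b y₀ x v hy₀
    have hset : {t | S.R z x t ∧ S.R b t v} = {t | S.R z x t ∧ S.R b t v} := rfl
    rw [Set.ncard_eq_toFinset_card', Set.toFinset_setOf] at hp
    rw [hp]
  rw [hcard]
  have hR : (∑ y, (S.p z b y : F) *
      ((if S.R z x u then (1:F) else 0) * (if S.R y x v then 1 else 0)))
      = (S.p z b y₀ : F) * ((if S.R z x u then (1:F) else 0) * 1) := by
    rw [Finset.sum_eq_single y₀]
    · rw [if_pos hy₀]
    · intro y _ hy
      rw [if_neg (fun h => hy (hy₀v y h)), mul_zero, mul_zero]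
    · intro h; exact absurd (Finset.mem_univ y₀) h
  rw [hR]
  ring

variable {S F x} in
private lemma A_comm_f (hval : ∀ a, ¬ ((ringChar F : ℕ) ∣ S.k a)) (b : Fin (d + 1)) :
    S.adj F b * f S F x = f S F x * S.adj F b := by
  have expandR : S.adj F b * f S F x
      = ∑ z, (S.k z : F)⁻¹ • ∑ y, (S.p b (S.inv z) (S.inv y) : F) • U S F x y z := by
    unfold f
    rw [Finset.mul_sum]
    exact Finset.sum_congr rfl fun z _ => by rw [mul_smul_comm, A_mul_U]
  have expandL : f S F x * S.adj F b
      = ∑ z, (S.k z : F)⁻¹ • ∑ y, (S.p z b y : F) • U S F x z y := by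
    unfold f
    rw [Finset.sum_mul]
    exact Finset.sum_congr rfl fun z _ => by rw [smul_mul_assoc, U_mul_A]
  have h1 : f S F x * (S.adj F b * f S F x) = S.adj F b * f S F x := by
    rw [expandR, Finset.mul_sum]
    refine Finset.sum_congr rfl fun z _ => ?_
    rw [mul_smul_comm, Finset.mul_sum]
    congr 1
    refine Finset.sum_congr rfl fun y _ => ?_
    rw [mul_smul_comm, f_mul_U hval]
  have h2 : (f S F x * S.adj F b) * f S F x = f S F x * S.adj F b := by
    rw [expandL, Finset.sum_mul]
    refine Finset.sum_congr rfl fun z _ => ?_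
    rw [smul_mul_assoc, Finset.sum_mul]
    congr 1
    refine Finset.sum_congr rfl fun y _ => ?_
    rw [smul_mul_assoc, U_mul_f hval]
  calc S.adj F b * f S F x = f S F x * (S.adj F b * f S F x) := h1.symm
    _ = (f S F x * S.adj F b) * f S F x := by rw [mul_assoc]
    _ = f S F x * S.adj F b := h2

private lemma E_mul_E (w z : Fin (d + 1)) :
    S.dualIdem F x w * S.dualIdem F x z = if w = z then S.dualIdem F x w else 0 := by
  unfold dualIdem
  rw [Matrix.diagonal_mul_diagonal]
  by_cases h : w = z
  · subst h
    rw [if_pos rfl]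
    ext u v
    by_cases hu : S.R w x u <;> simp [Matrix.diagonal_apply, hu]
  · rw [if_neg h]
    have : (fun u => (if S.R w x u then (1:F) else 0) * (if S.R z x u then 1 else 0))
        = fun _ => 0 := by
      funext u
      rw [ind_mul_ind, if_neg]
      rintro ⟨h1, h2⟩
      exact h (class_unique S x h1 h2)
    rw [this, Matrix.diagonal_zero]

private lemma E_mul_U (w y z : Fin (d + 1)) :
    S.dualIdem F x w * U S F x y z = if w = y then U S F x y z else 0 := by
  unfold U
  rw [← mul_assoc, ← mul_assoc, E_mul_E]
  by_cases h : w = y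
  · subst h; rw [if_pos rfl, if_pos rfl]
  · rw [if_neg h, if_neg h, zero_mul, zero_mul]

private lemma U_mul_E (w y z : Fin (d + 1)) :
    U S F x y z * S.dualIdem F x w = if z = w then U S F x y z else 0 := by
  unfold U
  rw [mul_assoc, mul_assoc, E_mul_E]
  by_cases h : z = w
  · subst h; rw [if_pos rfl, if_pos rfl, mul_assoc]
  · rw [if_neg h, if_neg h, mul_zero, mul_zero]

private lemma E_comm_f (w : Fin (d + 1)) :
    S.dualIdem F x w * f S F x = f S F x * S.dualIdem F x w := by
  unfold f
  rw [Finset.mul_sum, Finset.sum_mul]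
  refine Finset.sum_congr rfl fun z _ => ?_
  rw [mul_smul_comm, smul_mul_assoc, E_mul_U, U_mul_E]
  by_cases h : w = z
  · subst h; rfl
  · rw [if_neg h, if_neg (fun hh => h hh.symm)]

private lemma allOnes_eq_sum : allOnes X F = ∑ b, S.adj F b := by
  ext u v
  rw [Matrix.sum_apply]
  show (1 : F) = ∑ b, (if S.R b u v then (1:F) else 0)
  rw [Finset.sum_boole]
  obtain ⟨b₀, hb₀, hb₀u⟩ := S.partition u v
  have : (Finset.univ.filter fun b => S.R b u v) = {b₀} := by
    ext b
    simp only [Finset.mem_filter, Finset.mem_univ, true_and, Finset.mem_singleton]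
    exact ⟨fun h => hb₀u b h, fun h => h ▸ hb₀⟩
  rw [this]
  simp

private lemma adj_mem (b : Fin (d + 1)) : S.adj F b ∈ S.Terw F x :=
  Algebra.subset_adjoin (Or.inl ⟨b, rfl⟩)

private lemma dualIdem_mem (z : Fin (d + 1)) : S.dualIdem F x z ∈ S.Terw F x :=
  Algebra.subset_adjoin (Or.inr ⟨z, rfl⟩)

private lemma allOnes_mem : allOnes X F ∈ S.Terw F x := by
  rw [allOnes_eq_sum S F]
  exact Subalgebra.sum_mem _ fun b _ => adj_mem S F x b

private lemma U_mem (y z : Fin (d + 1)) : U S F x y z ∈ S.Terw F x :=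
  mul_mem (mul_mem (dualIdem_mem S F x y) (allOnes_mem S F x)) (dualIdem_mem S F x z)

private lemma f_mem : f S F x ∈ S.Terw F x :=
  Subalgebra.sum_mem _ fun z _ => Subalgebra.smul_mem _ (U_mem S F x z z) _

variable {S F x} in
private lemma f_comm (hval : ∀ a, ¬ ((ringChar F : ℕ) ∣ S.k a))
    {B : Matrix X X F} (hB : B ∈ S.Terw F x) : f S F x * B = B * f S F x := by
  induction hB using Algebra.adjoin_induction with
  | mem m hm =>
    rcases hm with ⟨b, rfl⟩ | ⟨z, rfl⟩
    · exact (A_comm_f hval b).symm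
    · exact (E_comm_f S F x z).symm
  | algebraMap r => exact (Algebra.commutes r (f S F x)).symm
  | add u v hu hv ihu ihv => rw [mul_add, add_mul, ihu, ihv]
  | mul u v hu hv ihu ihv =>
    rw [← mul_assoc, ihu, mul_assoc, ihv, ← mul_assoc]

private lemma sandwich (B : Matrix X X F) :
    allOnes X F * B * allOnes X F = (∑ u, ∑ v, B u v) • allOnes X F := by
  ext s t
  rw [Matrix.smul_apply]
  show (allOnes X F * B * allOnes X F) s t = _ • (1 : F)
  rw [Matrix.mul_apply]
  have h1 : ∀ v : X, (allOnes X F * B) s v * allOnes X F v t = ∑ u, B u v := by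
    intro v
    show (allOnes X F * B) s v * 1 = _
    rw [mul_one, Matrix.mul_apply]
    exact Finset.sum_congr rfl fun u _ => one_mul _
  rw [Finset.sum_congr rfl fun v _ => h1 v, smul_eq_mul, mul_one, Finset.sum_comm]

variable {S F x} in
private lemma U_sandwich (B : Matrix X X F) (y z v w : Fin (d + 1)) :
    U S F x v y * B * U S F x z w
      = (∑ u, ∑ t, (S.dualIdem F x y * B * S.dualIdem F x z) u t) • U S F x v w := by
  have h : U S F x v y * B * U S F x z w
      = S.dualIdem F x v * (allOnes X F * (S.dualIdem F x y * B * S.dualIdem F x z)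
          * allOnes X F) * S.dualIdem F x w := by
    unfold U; simp only [mul_assoc]
  rw [h, sandwich]
  unfold U
  rw [mul_smul_comm, smul_mul_assoc]

variable {S F x} in
private lemma block_sum_zero (hval : ∀ a, ¬ ((ringChar F : ℕ) ∣ S.k a))
    (M : S.Terw F x) (hM : M ∈ Ideal.jacobson (⊥ : Ideal (S.Terw F x)))
    (y z : Fin (d + 1)) :
    (∑ u, ∑ v, (S.dualIdem F x y * (M : Matrix X X F) * S.dualIdem F x z) u v) = 0 := by
  set B : Matrix X X F := (M : Matrix X X F) with hB
  set σ : F := ∑ u, ∑ v, (S.dualIdem F x y * B * S.dualIdem F x z) u v with hσ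
  have key : U S F x z y * B * U S F x z y = σ • U S F x z y := U_sandwich B y z z y
  by_contra hne
  set uT : S.Terw F x := ⟨U S F x z y, U_mem S F x z y⟩ with huT
  set e' : S.Terw F x := σ⁻¹ • (uT * M) with he'
  have he'J : e' ∈ Ideal.jacobson (⊥ : Ideal (S.Terw F x)) := by
    rw [he', Algebra.smul_def]
    exact Ideal.mul_mem_left _ _ (Ideal.mul_mem_left _ _ hM)
  have hval' : (e' : Matrix X X F) = σ⁻¹ • (U S F x z y * B) := rfl
  have hidem : e' * e' = e' := by
    apply Subtype.ext
    show (e' : Matrix X X F) * (e' : Matrix X X F) = (e' : Matrix X X F)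
    rw [hval', smul_mul_smul_comm]
    have : (U S F x z y * B) * (U S F x z y * B) = σ • (U S F x z y * B) := by
      rw [show (U S F x z y * B) * (U S F x z y * B)
          = (U S F x z y * B * U S F x z y) * B by simp only [mul_assoc], key,
        smul_mul_assoc]
    rw [this, smul_smul, mul_assoc, inv_mul_cancel₀ hne, mul_one]
  have he0 : e' = 0 := idem_jac he'J hidem
  have hUB : U S F x z y * B = 0 := by
    have h0 : (e' : Matrix X X F) = 0 := by rw [he0]; rfl
    rw [hval'] at h0
    rcases smul_eq_zero.mp h0 with h | h
    · exact absurd (inv_eq_zero.mp h) hne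
    · exact h
  have : σ • U S F x z y = 0 := by rw [← key, hUB, zero_mul]
  rcases smul_eq_zero.mp this with h | h
  · exact hne h
  · exact U_ne_zero hval z y h

variable {S F x} in
private lemma rad_annihilated (hval : ∀ a, ¬ ((ringChar F : ℕ) ∣ S.k a))
    (M : S.Terw F x) (hM : M ∈ Ideal.jacobson (⊥ : Ideal (S.Terw F x))) :
    f S F x * (M : Matrix X X F) = 0 ∧ (M : Matrix X X F) * f S F x = 0 := by
  set B : Matrix X X F := (M : Matrix X X F) with hB
  have hblocks : ∀ y z, U S F x y y * B * U S F x z z = 0 := by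
    intro y z
    rw [U_sandwich B y z y z, block_sum_zero hval M hM y z, zero_smul]
  have hfBf : f S F x * B * f S F x = 0 := by
    have h1 : f S F x * B * f S F x
        = ∑ y, (S.k y : F)⁻¹ •
            ∑ z, (S.k z : F)⁻¹ • (U S F x y y * B * U S F x z z) := by
      unfold f
      rw [Finset.sum_mul, Finset.sum_mul]
      refine Finset.sum_congr rfl fun y _ => ?_
      rw [smul_mul_assoc, smul_mul_assoc, Finset.mul_sum]
      congr 1
      exact Finset.sum_congr rfl fun z _ => (mul_smul_comm _ _ _)
    rw [h1]
    refine Finset.sum_eq_zero fun y _ => ?_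
    rw [Finset.sum_eq_zero fun z _ => by rw [hblocks y z, smul_zero], smul_zero]
  have hcomm : f S F x * B = B * f S F x := f_comm hval M.2
  have hfB : f S F x * B = 0 := by
    have : f S F x * B = f S F x * B * f S F x := by
      rw [mul_assoc, ← hcomm, ← mul_assoc, f_idem hval]
    rw [this, hfBf]
  exact ⟨hfB, by rw [← hcomm, hfB]⟩

variable {S F x} in
private lemma U_aa (ha : S.k a = 1) : U S F x a a = S.dualIdem F x a := by
  have hcard : (Finset.univ.filter fun u => S.R a x u).card = 1 := by
    rw [card_class S x, ha]
  obtain ⟨u0, hu0⟩ := Finset.card_eq_one.mp hcard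
  have hmem : ∀ {u : X}, S.R a x u → u = u0 := by
    intro u hu
    have : u ∈ Finset.univ.filter fun u => S.R a x u := by
      simp only [Finset.mem_filter, Finset.mem_univ, true_and]; exact hu
    rwa [hu0, Finset.mem_singleton] at this
  ext u v
  rw [U_apply]
  unfold dualIdem
  rw [Matrix.diagonal_apply]
  by_cases huv : u = v
  · subst huv
    by_cases hu : S.R a x u <;> simp [hu]
  · rw [if_neg huv]
    by_cases hu : S.R a x u
    · by_cases hv : S.R a x v
      · exact absurd ((hmem hu).trans (hmem hv).symm) huv
      · simp [hv]
    · simp [hu]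

end Stmt19Aux

/-- in a `p'`-valenced scheme, elements of the Jacobson radical of the
Terwilliger algebra are annihilated by `E_a^*` whenever `k_a = 1`. -/
theorem stmt_19 {X : Type} [Fintype X] [DecidableEq X] {d : ℕ} (S : AssocScheme X d)
    (F : Type) [Field F] (x : X) (hval : ∀ a, ¬ ((ringChar F : ℕ) ∣ S.k a))
    (a : Fin (d + 1)) (ha : S.k a = 1)
    (M : S.Terw F x) (hM : M ∈ Ideal.jacobson (⊥ : Ideal (S.Terw F x))) :
    S.dualIdem F x a * (M : Matrix X X F) = 0 ∧
      (M : Matrix X X F) * S.dualIdem F x a = 0 := by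
  obtain ⟨hfB, hBf⟩ := Stmt19Aux.rad_annihilated hval M hM
  have hfa : S.dualIdem F x a * Stmt19Aux.f S F x = S.dualIdem F x a := by
    unfold Stmt19Aux.f
    rw [Finset.mul_sum]
    rw [Finset.sum_eq_single a]
    · rw [mul_smul_comm, Stmt19Aux.E_mul_U, if_pos rfl, Stmt19Aux.U_aa ha, ha]
      norm_num
    · intro z _ hz
      rw [mul_smul_comm, Stmt19Aux.E_mul_U, if_neg (fun h => hz h.symm), smul_zero]
    · intro h; exact absurd (Finset.mem_univ a) h
  have haf : Stmt19Aux.f S F x * S.dualIdem F x a = S.dualIdem F x a := by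
    rw [← Stmt19Aux.E_comm_f, hfa]
  constructor
  · rw [← hfa, mul_assoc, hfB, mul_zero]
  · rw [← haf, ← mul_assoc, hBf, zero_mul]
end
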